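/- arXiv:1701.06139 — 3 statements merged into one kernel-verified Lean document; each statement's English description precedes it below -/
import Mathlib

section
/- If G is a 2-uniform graph in which a largest clique has order t, then λ(G) = λ(K_t) = (1/2)(1 − 1/t). -/
structure RHypergraph (r : ℕ) where
  verts : Finset ℕ
  edges : Finset (Finset ℕ)
  edge_sub : ∀ e ∈ edges, e ⊆ verts
  edge_card : ∀ e ∈ edges, e.card = r

namespace RHypergraph

variable {r : ℕ}

/-- The polynomial value `λ(E, x) = Σ_{e ∈ E} Π_{i ∈ e} x_i`. -/
def polyValue (E : Finset (Finset ℕ)) (x : ℕ → ℝ) : ℝ :=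
  ∑ e ∈ E, ∏ i ∈ e, x i

/-- A legal weighting: nonnegative, supported on the vertex set, summing to 1. -/
def LegalWeighting (G : RHypergraph r) (x : ℕ → ℝ) : Prop :=
  (∀ i, 0 ≤ x i) ∧ (∀ i ∉ G.verts, x i = 0) ∧ ∑ i ∈ G.verts, x i = 1

/-- The Lagrangian of a hypergraph. -/
noncomputable def lagrangian (G : RHypergraph r) : ℝ :=
  sSup {l : ℝ | ∃ x, G.LegalWeighting x ∧ l = polyValue G.edges x}

/-- An optimum weighting attains the Lagrangian. -/
def IsOptimal (G : RHypergraph r) (x : ℕ → ℝ) : Prop :=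
  G.LegalWeighting x ∧ polyValue G.edges x = G.lagrangian

def IsSubgraph (H G : RHypergraph r) : Prop :=
  H.verts ⊆ G.verts ∧ H.edges ⊆ G.edges

def IsProperSubgraph (H G : RHypergraph r) : Prop :=
  H.IsSubgraph G ∧ (H.verts ≠ G.verts ∨ H.edges ≠ G.edges)

/-- A hypergraph is dense if every proper subgraph has strictly smaller Lagrangian. -/
def Dense (G : RHypergraph r) : Prop :=
  ∀ H : RHypergraph r, H.IsProperSubgraph G → H.lagrangian < G.lagrangian

/-- The link `E_i` of a vertex `i`. -/
def link (G : RHypergraph r) (i : ℕ) : Finset (Finset ℕ) :=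
  (G.edges.filter fun e => i ∈ e).image fun e => e.erase i

/-- The pair link `E_{ij}`. -/
def pairLink (G : RHypergraph r) (i j : ℕ) : Finset (Finset ℕ) :=
  (G.edges.filter fun e => i ∈ e ∧ j ∈ e).image fun e => (e.erase i).erase j

/-- `E_{i \ j} = E_i ∩ E_j^c`. -/
def linkDiff (G : RHypergraph r) (i j : ℕ) : Finset (Finset ℕ) :=
  (G.link i).filter fun A => j ∉ A ∧ insert j A ∉ G.edges

/-- `G` contains a clique of order `t`. -/
def HasClique (G : RHypergraph r) (t : ℕ) : Prop :=
  ∃ S ⊆ G.verts, S.card = t ∧ S.powersetCard r ⊆ G.edges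

/-- `G` is left-compressed: replacing a vertex of an edge by a smaller vertex
not in the edge yields an edge. -/
def LeftCompressed (G : RHypergraph r) : Prop :=
  ∀ e ∈ G.edges, ∀ i j : ℕ, i ∈ G.verts → i < j → j ∈ e → i ∉ e →
    insert i (e.erase j) ∈ G.edges

/-- The subgraph induced on a vertex set `S`. -/
def induce (G : RHypergraph r) (S : Finset ℕ) : RHypergraph r :=
  ⟨G.verts ∩ S, G.edges.filter fun e => e ⊆ S,
   fun e he => Finset.subset_inter (G.edge_sub e (Finset.mem_filter.mp he).1)
     (Finset.mem_filter.mp he).2,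
   fun e he => G.edge_card e (Finset.mem_filter.mp he).1⟩

end RHypergraph

/-- The complete `r`-graph on vertex set `{1, …, t}`. -/
def completeHG (t r : ℕ) : RHypergraph r :=
  ⟨Finset.Icc 1 t, (Finset.Icc 1 t).powersetCard r,
   fun _ he => (Finset.mem_powersetCard.mp he).1,
   fun _ he => (Finset.mem_powersetCard.mp he).2⟩

/-- `H₁ = [t-1]^{(3)} \ {(t-3)(t-2)(t-1)}`. -/
def H1 (t : ℕ) : RHypergraph 3 :=
  ⟨Finset.Icc 1 (t-1), (completeHG (t-1) 3).edges.erase {t-3, t-2, t-1},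
   fun e he => (completeHG (t-1) 3).edge_sub e (Finset.mem_of_mem_erase he),
   fun e he => (completeHG (t-1) 3).edge_card e (Finset.mem_of_mem_erase he)⟩

/-! If two vertices of the support of a legal weighting lie in no common edge, moving all the
weight of one onto the other, the one with the larger link value, does not decrease `λ` and
shrinks the support. So every legal weighting is dominated by one supported on a clique `S`, where
`|S| ≤ t` and Cauchy–Schwarz gives `λ = (1 - ∑ x_i²) / 2 ≤ (1 - 1/|S|) / 2 ≤ (1 - 1/t) / 2`.
The uniform weighting on a `t`-clique attains this value. -/

open Finset in
lemma Finset.two_mul_sum_powersetCard_two_prod {α R : Type*} [DecidableEq α] [CommRing R]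
    (s : Finset α) (f : α → R) :
    2 * ∑ e ∈ s.powersetCard 2, ∏ i ∈ e, f i = (∑ i ∈ s, f i) ^ 2 - ∑ i ∈ s, f i ^ 2 := by
  induction s using Finset.induction_on with
  | empty => rw [powersetCard_eq_empty.mpr (by simp)]; simp
  | insert a s ha ih =>
    have hpairs : ∑ e ∈ s.powersetCard 1, ∏ i ∈ insert a e, f i = f a * ∑ i ∈ s, f i := by
      rw [powersetCard_one, sum_map, mul_sum]
      refine sum_congr rfl fun i hi => ?_
      rw [Function.Embedding.coeFn_mk, prod_pair (ne_of_mem_of_not_mem hi ha).symm]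
    have hinj : Set.InjOn (insert a) (s.powersetCard 1 : Set (Finset α)) := fun A hA B hB hAB => by
      rw [← erase_insert (fun h => ha ((mem_powersetCard.mp hA).1 h)), hAB,
        erase_insert (fun h => ha ((mem_powersetCard.mp hB).1 h))]
    have hdisj : Disjoint (s.powersetCard 2) ((s.powersetCard 1).image (insert a)) := by
      refine disjoint_left.mpr fun e he he' => ?_
      obtain ⟨A, -, rfl⟩ := mem_image.mp he'
      exact ha ((mem_powersetCard.mp he).1 (mem_insert_self a A))
    rw [powersetCard_succ_insert ha, sum_union hdisj, sum_image hinj, hpairs, mul_add, ih,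
      sum_insert ha, sum_insert ha]
    ring

namespace RHypergraph

open Finset

variable {r t : ℕ} {G : RHypergraph r} {E : Finset (Finset ℕ)} {x y : ℕ → ℝ} {i j : ℕ}

/-- The value at `x` of the link `E_i`, i.e. the partial derivative `∂λ(E, x)/∂x_i`. -/
def linkValue (E : Finset (Finset ℕ)) (x : ℕ → ℝ) (i : ℕ) : ℝ :=
  ∑ e ∈ E with i ∈ e, ∏ k ∈ e.erase i, x k

lemma polyValue_eq_add_mul_linkValue (E : Finset (Finset ℕ)) (x : ℕ → ℝ) (i : ℕ) :
    polyValue E x = polyValue {e ∈ E | i ∉ e} x + x i * linkValue E x i := by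
  unfold polyValue linkValue
  rw [← sum_filter_add_sum_filter_not E (i ∈ ·), mul_sum, add_comm]
  congr 1
  exact sum_congr rfl fun e he => (mul_prod_erase e x (mem_filter.mp he).2).symm

lemma polyValue_eq_add_linkValue_add_linkValue (hE : ∀ e ∈ E, ¬(i ∈ e ∧ j ∈ e))
    (x : ℕ → ℝ) :
    polyValue E x = polyValue {e ∈ E | i ∉ e ∧ j ∉ e} x
      + x i * linkValue E x i + x j * linkValue E x j := by
  have hlink : linkValue {e ∈ E | i ∉ e} x j = linkValue E x j := by
    unfold linkValue
    rw [filter_filter]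
    exact sum_congr (filter_congr fun e he =>
      ⟨And.right, fun hj => ⟨fun hi => hE e he ⟨hi, hj⟩, hj⟩⟩) fun _ _ => rfl
  rw [polyValue_eq_add_mul_linkValue E x i,
    polyValue_eq_add_mul_linkValue {e ∈ E | i ∉ e} x j, filter_filter, hlink]
  ring

lemma polyValue_congr (h : ∀ e ∈ E, ∀ k ∈ e, x k = y k) : polyValue E x = polyValue E y :=
  sum_congr rfl fun e he => prod_congr rfl (h e he)

lemma linkValue_congr (h : ∀ e ∈ E, i ∈ e → ∀ k ∈ e.erase i, x k = y k) :
    linkValue E x i = linkValue E y i :=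
  sum_congr rfl fun e he => prod_congr rfl (h e (mem_filter.mp he).1 (mem_filter.mp he).2)

/-- `x` with the weight of `j` moved onto `i`. -/
def moveWeight (x : ℕ → ℝ) (j i : ℕ) : ℕ → ℝ :=
  x + Pi.single i (x j) - Pi.single j (x j)

lemma moveWeight_apply_of_ne {k : ℕ} (hki : k ≠ i) (hkj : k ≠ j) : moveWeight x j i k = x k := by
  simp [moveWeight, hki, hkj]

lemma moveWeight_apply_target (hij : i ≠ j) : moveWeight x j i i = x i + x j := by
  simp [moveWeight, hij]

lemma moveWeight_apply_source (hij : i ≠ j) : moveWeight x j i j = 0 := by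
  simp [moveWeight, hij.symm]

/-- Since no edge meets both `i` and `j`, `λ` is affine in `(x i, x j)` with slopes the two link
values, so the move gains `x j * (linkValue E x i - linkValue E x j)`. -/
lemma polyValue_le_polyValue_moveWeight (hij : i ≠ j) (hE : ∀ e ∈ E, ¬(i ∈ e ∧ j ∈ e))
    (hxj : 0 ≤ x j) (hL : linkValue E x j ≤ linkValue E x i) :
    polyValue E x ≤ polyValue E (moveWeight x j i) := by
  have hrest : polyValue {e ∈ E | i ∉ e ∧ j ∉ e} (moveWeight x j i)
      = polyValue {e ∈ E | i ∉ e ∧ j ∉ e} x := by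
    refine polyValue_congr fun e he k hk => ?_
    obtain ⟨-, hie, hje⟩ := mem_filter.mp he
    exact moveWeight_apply_of_ne (ne_of_mem_of_not_mem hk hie) (ne_of_mem_of_not_mem hk hje)
  have hLi : linkValue E (moveWeight x j i) i = linkValue E x i :=
    linkValue_congr fun e he hie k hk => moveWeight_apply_of_ne (ne_of_mem_erase hk)
      fun hkj => hE e he ⟨hie, hkj ▸ mem_of_mem_erase hk⟩
  have hLj : linkValue E (moveWeight x j i) j = linkValue E x j :=
    linkValue_congr fun e he hje k hk => moveWeight_apply_of_ne
      (fun hki => hE e he ⟨hki ▸ mem_of_mem_erase hk, hje⟩) (ne_of_mem_erase hk)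
  rw [polyValue_eq_add_linkValue_add_linkValue hE x,
    polyValue_eq_add_linkValue_add_linkValue hE (moveWeight x j i), hrest, hLi, hLj,
    moveWeight_apply_target hij, moveWeight_apply_source hij]
  nlinarith [mul_le_mul_of_nonneg_left hL hxj]

lemma legalWeighting_moveWeight (hx : G.LegalWeighting x) (hij : i ≠ j) (hi : i ∈ G.verts)
    (hj : j ∈ G.verts) : G.LegalWeighting (moveWeight x j i) := by
  obtain ⟨hx0, hxV, hx1⟩ := hx
  refine ⟨fun k => ?_, fun k hk => ?_, ?_⟩
  · rcases eq_or_ne k i with rfl | hki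
    · rw [moveWeight_apply_target hij]
      exact add_nonneg (hx0 k) (hx0 j)
    rcases eq_or_ne k j with rfl | hkj
    · rw [moveWeight_apply_source hij]
    · rw [moveWeight_apply_of_ne hki hkj]
      exact hx0 k
  · rw [moveWeight_apply_of_ne (fun h : k = i => hk (h ▸ hi))
      (fun h : k = j => hk (h ▸ hj))]
    exact hxV k hk
  · simp [moveWeight, sum_add_distrib, sum_sub_distrib, sum_pi_single', hi, hj, hx1]

noncomputable def support (G : RHypergraph r) (x : ℕ → ℝ) : Finset ℕ :=
  {i ∈ G.verts | x i ≠ 0}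

lemma sum_support (hx : G.LegalWeighting x) : ∑ i ∈ G.support x, x i = 1 := by
  rw [support, sum_filter_ne_zero]
  exact hx.2.2

lemma support_moveWeight_subset (hij : i ≠ j) (hi : i ∈ G.support x) :
    G.support (moveWeight x j i) ⊆ (G.support x).erase j := by
  intro k hk
  obtain ⟨hkV, hk0⟩ := mem_filter.mp hk
  have hkj : k ≠ j := by
    rintro rfl
    exact hk0 (moveWeight_apply_source hij)
  refine mem_erase.mpr ⟨hkj, ?_⟩
  rcases eq_or_ne k i with rfl | hki
  · exact hi
  · rw [moveWeight_apply_of_ne hki hkj] at hk0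
    exact mem_filter.mpr ⟨hkV, hk0⟩

lemma exists_polyValue_ge_of_card_support_lt (hx : G.LegalWeighting x)
    (hi : i ∈ G.support x) (hj : j ∈ G.support x) (hij : i ≠ j)
    (hE : ∀ e ∈ G.edges, ¬(i ∈ e ∧ j ∈ e)) :
    ∃ y, G.LegalWeighting y ∧ #(G.support y) < #(G.support x) ∧
      polyValue G.edges x ≤ polyValue G.edges y := by
  wlog hL : linkValue G.edges x j ≤ linkValue G.edges x i generalizing i j
  · exact this hj hi hij.symm (fun e he h => hE e he h.symm) (le_of_not_ge hL)
  refine ⟨moveWeight x j i, legalWeighting_moveWeight hx hij (filter_subset _ _ hi)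
    (filter_subset _ _ hj), ?_, polyValue_le_polyValue_moveWeight hij hE (hx.1 j) hL⟩
  exact (card_le_card (support_moveWeight_subset hij hi)).trans_lt (card_erase_lt_of_mem hj)

lemma polyValue_le_sum_powersetCard_support (hx : G.LegalWeighting x) :
    polyValue G.edges x ≤ ∑ e ∈ (G.support x).powersetCard r, ∏ i ∈ e, x i := by
  rw [polyValue, ← sum_filter_of_ne (p := (· ⊆ G.support x)) fun e he hprod k hk =>
    mem_filter.mpr ⟨G.edge_sub e he hk, prod_ne_zero_iff.mp hprod k hk⟩]
  refine sum_le_sum_of_subset_of_nonneg (fun e he => ?_) fun e _ _ => prod_nonneg fun k _ => hx.1 k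
  obtain ⟨heE, heS⟩ := mem_filter.mp he
  exact mem_powersetCard.mpr ⟨heS, G.edge_card e heE⟩

lemma HasClique.mono {m n : ℕ} (h : G.HasClique n) (hmn : m ≤ n) : G.HasClique m := by
  obtain ⟨S, hSV, rfl, hSE⟩ := h
  obtain ⟨T, hTS, hT⟩ := exists_subset_card_eq hmn
  exact ⟨T, hTS.trans hSV, hT, (powersetCard_mono hTS).trans hSE⟩

lemma card_le_of_not_hasClique {S : Finset ℕ} (hSV : S ⊆ G.verts)
    (hSE : S.powersetCard r ⊆ G.edges) (hmax : ¬G.HasClique (t + 1)) : #S ≤ t := by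
  by_contra! h
  exact hmax (HasClique.mono ⟨S, hSV, rfl, hSE⟩ h)

lemma eq_pair_of_mem {G : RHypergraph 2} {e : Finset ℕ} (he : e ∈ G.edges) (hi : i ∈ e)
    (hj : j ∈ e) (hij : i ≠ j) : e = {i, j} :=
  (eq_of_subset_of_card_le (insert_subset hi (singleton_subset_iff.mpr hj))
    (by rw [G.edge_card e he, card_pair hij])).symm

lemma polyValue_le_of_powersetCard_support_subset {G : RHypergraph 2}
    (hmax : ¬G.HasClique (t + 1)) (hx : G.LegalWeighting x)
    (hS : (G.support x).powersetCard 2 ⊆ G.edges) :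
    polyValue G.edges x ≤ 1 / 2 * (1 - 1 / (t : ℝ)) := by
  have hsum := sum_support hx
  have hcard : #(G.support x) ≤ t := card_le_of_not_hasClique (filter_subset _ _) hS hmax
  have hpos : (0 : ℝ) < #(G.support x) := by
    exact_mod_cast card_pos.mpr (nonempty_of_sum_ne_zero (hsum ▸ one_ne_zero))
  have hcs : 1 ≤ #(G.support x) * ∑ i ∈ G.support x, x i ^ 2 := by
    simpa [hsum] using sq_sum_le_card_mul_sum_sq (s := G.support x) (f := x)
  have hsq : 1 / (t : ℝ) ≤ ∑ i ∈ G.support x, x i ^ 2 :=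
    (one_div_le_one_div_of_le hpos (by exact_mod_cast hcard)).trans ((div_le_iff₀' hpos).mpr hcs)
  have hpairs := two_mul_sum_powersetCard_two_prod (G.support x) x
  rw [hsum, one_pow] at hpairs
  linarith [polyValue_le_sum_powersetCard_support hx]

theorem polyValue_le_of_not_hasClique {G : RHypergraph 2}
    (hmax : ¬G.HasClique (t + 1)) (hx : G.LegalWeighting x) :
    polyValue G.edges x ≤ 1 / 2 * (1 - 1 / (t : ℝ)) := by
  induction hn : #(G.support x) using Nat.strong_induction_on generalizing x with
  | _ n ih =>
  by_cases hS : (G.support x).powersetCard 2 ⊆ G.edges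
  · exact polyValue_le_of_powersetCard_support_subset hmax hx hS
  obtain ⟨e, he, heE⟩ := not_subset.mp hS
  obtain ⟨heS, he2⟩ := mem_powersetCard.mp he
  obtain ⟨i, j, hij, rfl⟩ := card_eq_two.mp he2
  obtain ⟨y, hy, hlt, hle⟩ := exists_polyValue_ge_of_card_support_lt hx
    (heS (mem_insert_self i _)) (heS (mem_insert_of_mem (mem_singleton_self j))) hij
    fun e' he' h => heE (eq_pair_of_mem he' h.1 h.2 hij ▸ he')
  exact hle.trans (ih _ (hn ▸ hlt) hy rfl)

lemma exists_legalWeighting_le_polyValue {G : RHypergraph 2} (ht : 0 < t)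
    (hclique : G.HasClique t) :
    ∃ x, G.LegalWeighting x ∧ 1 / 2 * (1 - 1 / (t : ℝ)) ≤ polyValue G.edges x := by
  obtain ⟨S, hSV, hSt, hSE⟩ := hclique
  have ht' : (t : ℝ) ≠ 0 := by positivity
  set x : ℕ → ℝ := fun i => if i ∈ S then 1 / t else 0
  have hx : G.LegalWeighting x := by
    refine ⟨fun i => by positivity, fun i hi => if_neg fun h => hi (hSV h), ?_⟩
    rw [sum_ite_mem, inter_eq_right.mpr hSV, sum_const, hSt, nsmul_eq_mul]
    field_simp
  have hxS : ∀ i ∈ S, x i = 1 / t := fun i hi => if_pos hi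
  have hpairs := two_mul_sum_powersetCard_two_prod S x
  rw [sum_congr rfl hxS, (sum_congr rfl fun i hi => by rw [hxS i hi] :
    ∑ i ∈ S, x i ^ 2 = ∑ i ∈ S, (1 / (t : ℝ)) ^ 2), sum_const, sum_const, hSt, nsmul_eq_mul,
    nsmul_eq_mul] at hpairs
  refine ⟨x, hx, ?_⟩
  calc 1 / 2 * (1 - 1 / (t : ℝ)) = ∑ e ∈ S.powersetCard 2, ∏ i ∈ e, x i := by
        field_simp at hpairs ⊢
        linarith
    _ ≤ polyValue G.edges x :=
        sum_le_sum_of_subset_of_nonneg hSE fun e _ _ => prod_nonneg fun i _ => hx.1 i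

lemma lagrangian_eq_of_forall_le {c : ℝ} (hle : ∀ x, G.LegalWeighting x → polyValue G.edges x ≤ c)
    (hx : G.LegalWeighting x) (hc : c ≤ polyValue G.edges x) : G.lagrangian = c :=
  IsGreatest.csSup_eq ⟨⟨x, hx, (le_antisymm (hle x hx) hc).symm⟩, by
    rintro _ ⟨y, hy, rfl⟩
    exact hle y hy⟩

theorem lagrangian_eq_of_hasClique_of_not_hasClique {G : RHypergraph 2} (ht : 0 < t)
    (hclique : G.HasClique t) (hmax : ¬G.HasClique (t + 1)) :
    G.lagrangian = 1 / 2 * (1 - 1 / (t : ℝ)) := by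
  obtain ⟨x, hx, hc⟩ := exists_legalWeighting_le_polyValue ht hclique
  exact lagrangian_eq_of_forall_le (fun _ hy => polyValue_le_of_not_hasClique hmax hy) hx hc

end RHypergraph

lemma completeHG_hasClique (t r : ℕ) : (completeHG t r).HasClique t :=
  ⟨Finset.Icc 1 t, subset_rfl, Nat.card_Icc 1 t, subset_rfl⟩

lemma completeHG_not_hasClique (t r : ℕ) : ¬(completeHG t r).HasClique (t + 1) := by
  rintro ⟨S, hS, hcard, -⟩
  have := Finset.card_le_card hS
  simp only [completeHG, Nat.card_Icc, hcard] at this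
  omega

/-- Motzkin–Straus: if the largest clique of a 2-graph has order `t`, then
`λ(G) = λ(K_t) = (1/2)(1 - 1/t)`. -/
theorem motzkin_straus (G : RHypergraph 2) (t : ℕ) (ht : 0 < t)
    (hclique : G.HasClique t) (hmax : ¬ G.HasClique (t + 1)) :
    G.lagrangian = (completeHG t 2).lagrangian ∧
    G.lagrangian = (1 / 2) * (1 - 1 / (t : ℝ)) := by
  have hG := RHypergraph.lagrangian_eq_of_hasClique_of_not_hasClique ht hclique hmax
  have hK := RHypergraph.lagrangian_eq_of_hasClique_of_not_hasClique ht (completeHG_hasClique t 2)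
    (completeHG_not_hasClique t 2)
  exact ⟨hG.trans hK.symm, hG⟩
end

section
/- Let G be an r-uniform hypergraph and x = (x₁,…,xₙ) an optimum weighting for G with exactly k positive weights x₁,…,x_k. Then for every i ∈ [k], λ(E_i, x) = r·λ(G), where E_i is the link of vertex i; in particular λ(E_i,x) = λ(E_j,x) for all i, j ∈ [k]. -/
namespace RHypergraph

variable {r : ℕ}

theorem polyValue_link (G : RHypergraph r) (x : ℕ → ℝ) (i : ℕ) :
    polyValue (G.link i) x = ∑ e ∈ G.edges with i ∈ e, ∏ v ∈ e.erase i, x v := by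
  refine Finset.sum_image fun a ha b hb hab => ?_
  rw [← Finset.insert_erase (Finset.mem_filter.mp ha).2,
    ← Finset.insert_erase (Finset.mem_filter.mp hb).2, hab]

theorem LegalWeighting.le_one {G : RHypergraph r} {x : ℕ → ℝ} (hx : G.LegalWeighting x)
    (v : ℕ) : x v ≤ 1 := by
  by_cases hv : v ∈ G.verts
  · exact hx.2.2 ▸ Finset.single_le_sum (fun u _ => hx.1 u) hv
  · exact (hx.2.1 v hv).trans_le zero_le_one

theorem LegalWeighting.mem_verts_of_pos {G : RHypergraph r} {x : ℕ → ℝ}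
    (hx : G.LegalWeighting x) {v : ℕ} (hv : 0 < x v) : v ∈ G.verts := by
  by_contra h
  exact hv.ne' (hx.2.1 v h)

theorem polyValue_le_lagrangian {G : RHypergraph r} {x : ℕ → ℝ} (hx : G.LegalWeighting x) :
    polyValue G.edges x ≤ G.lagrangian := by
  refine le_csSup ⟨G.edges.card, ?_⟩ ⟨x, hx, rfl⟩
  rintro _ ⟨y, hy, rfl⟩
  calc polyValue G.edges y ≤ ∑ _e ∈ G.edges, (1 : ℝ) :=
        Finset.sum_le_sum fun e _ => Finset.prod_le_one (fun v _ => hy.1 v) fun v _ => hy.le_one v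
    _ = G.edges.card := by simp

theorem sum_mul_polyValue_link (G : RHypergraph r) (x : ℕ → ℝ) :
    ∑ v ∈ G.verts, x v * polyValue (G.link v) x = r * polyValue G.edges x := by
  simp_rw [polyValue_link, Finset.sum_filter, Finset.mul_sum, polyValue]
  rw [Finset.sum_comm, Finset.mul_sum]
  refine Finset.sum_congr rfl fun e he => ?_
  simp_rw [mul_ite, mul_zero]
  rw [Finset.sum_ite_mem, Finset.inter_eq_right.mpr (G.edge_sub e he),
    Finset.sum_congr rfl fun v hv => Finset.mul_prod_erase e x hv, Finset.sum_const,
    G.edge_card e he, nsmul_eq_mul]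

theorem hasDerivAt_polyValue_add_smul (E : Finset (Finset ℕ)) (x c : ℕ → ℝ) :
    HasDerivAt (fun t : ℝ => polyValue E (x + t • c))
      (∑ e ∈ E, ∑ v ∈ e, (∏ u ∈ e.erase v, x u) * c v) 0 := by
  have hline : ∀ v, HasDerivAt (fun t : ℝ => (x + t • c) v) (c v) 0 := fun v => by
    simpa using ((hasDerivAt_id (0 : ℝ)).mul_const (c v)).const_add (x v)
  have := HasDerivAt.fun_sum (u := E) fun e _ =>
    HasDerivAt.fun_finsetProd (u := e) fun v _ => hline v
  simpa [polyValue] using this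

theorem LegalWeighting.add_smul_single_sub_single {G : RHypergraph r} {x : ℕ → ℝ}
    (hx : G.LegalWeighting x) {i j : ℕ} (hi : i ∈ G.verts) (hj : j ∈ G.verts) {t : ℝ}
    (hti : -x i ≤ t) (htj : t ≤ x j) :
    G.LegalWeighting (x + t • (Pi.single i 1 - Pi.single j 1)) := by
  refine ⟨fun v => ?_, fun v hv => ?_, ?_⟩
  · simp only [Pi.add_apply, Pi.smul_apply, Pi.sub_apply, Pi.single_apply, smul_eq_mul]
    split_ifs with hvi hvj hvj <;> subst_vars <;> linarith [hx.1 v]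
  · have hvi : v ≠ i := fun h => hv (h ▸ hi)
    have hvj : v ≠ j := fun h => hv (h ▸ hj)
    simp [hvi, hvj, hx.2.1 v hv]
  · simp only [Pi.add_apply, Pi.smul_apply, Pi.sub_apply, smul_eq_mul]
    rw [Finset.sum_add_distrib, ← Finset.mul_sum, Finset.sum_sub_distrib,
      Finset.sum_pi_single', Finset.sum_pi_single', if_pos hi, if_pos hj, hx.2.2]
    ring

theorem IsOptimal.polyValue_link_eq {G : RHypergraph r} {x : ℕ → ℝ} (hx : G.IsOptimal x)
    {i j : ℕ} (hi : 0 < x i) (hj : 0 < x j) :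
    polyValue (G.link i) x = polyValue (G.link j) x := by
  set c : ℕ → ℝ := Pi.single i 1 - Pi.single j 1
  have hmax : IsLocalMax (fun t : ℝ => polyValue G.edges (x + t • c)) 0 := by
    filter_upwards [Icc_mem_nhds (neg_neg_of_pos hi) hj] with t ht
    simpa [hx.2] using polyValue_le_lagrangian <| hx.1.add_smul_single_sub_single
      (hx.1.mem_verts_of_pos hi) (hx.1.mem_verts_of_pos hj) ht.1 ht.2
  have hdir : ∀ e : Finset ℕ, ∑ v ∈ e, (∏ u ∈ e.erase v, x u) * c v =
      (if i ∈ e then ∏ u ∈ e.erase i, x u else 0) - if j ∈ e then ∏ u ∈ e.erase j, x u else 0 := by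
    intro e
    simp [c, Pi.single_apply, mul_sub, Finset.sum_sub_distrib]
  have hcrit := hmax.hasDerivAt_eq_zero (hasDerivAt_polyValue_add_smul G.edges x c)
  simp_rw [hdir, Finset.sum_sub_distrib] at hcrit
  rw [polyValue_link, polyValue_link, Finset.sum_filter, Finset.sum_filter]
  linarith

end RHypergraph

/-- Frankl–Rödl lemma (a): for an optimum weighting `x` and any vertex `i` with
positive weight, `λ(E_i, x) = r·λ(G)`. -/
theorem frankl_rodl_a {r : ℕ} (G : RHypergraph r) (x : ℕ → ℝ)
    (hx : G.IsOptimal x) :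
    ∀ i ∈ G.verts, 0 < x i →
      RHypergraph.polyValue (G.link i) x = (r : ℝ) * G.lagrangian := by
  intro i _ hxi
  calc RHypergraph.polyValue (G.link i) x
      = ∑ v ∈ G.verts, x v * RHypergraph.polyValue (G.link i) x := by
        rw [← Finset.sum_mul, hx.1.2.2, one_mul]
    _ = ∑ v ∈ G.verts, x v * RHypergraph.polyValue (G.link v) x := by
        refine Finset.sum_congr rfl fun v _ => ?_
        rcases (hx.1.1 v).eq_or_lt with hv | hv
        · rw [← hv, zero_mul, zero_mul]
        · rw [hx.polyValue_link_eq hv hxi]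
    _ = r * G.lagrangian := by rw [G.sum_mul_polyValue_link, hx.2]
end

section
/- Let G be an r-uniform hypergraph and x an optimum weighting for G with exactly k positive weights, such that x has the minimal number of positive entries among all optimum weightings (any legal weighting with fewer positive entries gives strictly smaller value). Then for every pair i, j of vertices with positive weight, there is an edge of G containing both i and j. -/
/-! If no edge contains both `i` and `j`, the polynomial `λ(E, x)` is affine in the pair
`(x i, x j)` along the line `x i + x j = const`, of slope `∂ᵢλ - ∂ⱼλ`. Moving the whole
weight of one of the two vertices onto the other, in the direction of the larger partial
derivative, gives a legal weighting with one positive entry fewer and no smaller value,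
contradicting minimality. -/

namespace RHypergraph

/-- The partial derivative `∂λ(E, x)/∂x_i`. -/
def linkWeight (E : Finset (Finset ℕ)) (x : ℕ → ℝ) (i : ℕ) : ℝ :=
  ∑ e ∈ E with i ∈ e, ∏ k ∈ e.erase i, x k

def transfer (x : ℕ → ℝ) (i j : ℕ) : ℕ → ℝ :=
  Function.update (Function.update x j 0) i (x i + x j)

section transfer

variable {x : ℕ → ℝ} {i j k : ℕ}

@[simp]
lemma transfer_apply_left : transfer x i j i = x i + x j :=
  Function.update_self ..

@[simp]
lemma transfer_apply_right (hij : i ≠ j) : transfer x i j j = 0 := by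
  simp [transfer, hij.symm]

lemma transfer_apply_of_ne (hi : k ≠ i) (hj : k ≠ j) : transfer x i j k = x k := by
  simp [transfer, hi, hj]

lemma prod_transfer_of_not_mem {s : Finset ℕ} (hi : i ∉ s) (hj : j ∉ s) :
    ∏ k ∈ s, transfer x i j k = ∏ k ∈ s, x k :=
  Finset.prod_congr rfl fun _ hk =>
    transfer_apply_of_ne (ne_of_mem_of_not_mem hk hi) (ne_of_mem_of_not_mem hk hj)

lemma prod_transfer (hij : i ≠ j) {e : Finset ℕ} (he : ¬(i ∈ e ∧ j ∈ e)) :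
    ∏ k ∈ e, transfer x i j k = ∏ k ∈ e, x k +
      x j * ((if i ∈ e then ∏ k ∈ e.erase i, x k else 0) -
        (if j ∈ e then ∏ k ∈ e.erase j, x k else 0)) := by
  by_cases hie : i ∈ e
  · have hje : j ∉ e := fun hje => he ⟨hie, hje⟩
    rw [← Finset.mul_prod_erase e _ hie, ← Finset.mul_prod_erase e x hie,
      prod_transfer_of_not_mem (Finset.notMem_erase i e)
        fun h => hje (Finset.mem_of_mem_erase h)]
    simp only [transfer_apply_left, hie, hje, if_true, if_false]
    ring
  · by_cases hje : j ∈ e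
    · rw [Finset.prod_eq_zero hje (transfer_apply_right hij), ← Finset.mul_prod_erase e x hje]
      simp only [hie, hje, if_true, if_false]
      ring
    · simp [prod_transfer_of_not_mem hie hje, hie, hje]

lemma polyValue_transfer (hij : i ≠ j) {E : Finset (Finset ℕ)}
    (hE : ∀ e ∈ E, ¬(i ∈ e ∧ j ∈ e)) :
    polyValue E (transfer x i j) =
      polyValue E x + x j * (linkWeight E x i - linkWeight E x j) := by
  simp only [polyValue, linkWeight, Finset.sum_filter, mul_sub, Finset.mul_sum,
    ← Finset.sum_sub_distrib, ← Finset.sum_add_distrib]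
  refine Finset.sum_congr rfl fun e he => ?_
  rw [prod_transfer hij (hE e he)]
  split_ifs <;> ring

lemma legalWeighting_transfer {r : ℕ} {G : RHypergraph r} (hx : G.LegalWeighting x)
    (hi : i ∈ G.verts) (hj : j ∈ G.verts) (hij : i ≠ j) :
    G.LegalWeighting (transfer x i j) := by
  obtain ⟨hnonneg, hsupp, hsum⟩ := hx
  refine ⟨fun k => ?_, fun k hk => ?_, ?_⟩
  · by_cases hki : k = i
    · subst hki; simpa using add_nonneg (hnonneg k) (hnonneg j)
    by_cases hkj : k = j
    · subst hkj; simp [hij]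
    · simpa [transfer_apply_of_ne hki hkj] using hnonneg k
  · rw [transfer_apply_of_ne (ne_of_mem_of_not_mem hi hk).symm
      (ne_of_mem_of_not_mem hj hk).symm]
    exact hsupp k hk
  · have hji : j ∈ G.verts.erase i := Finset.mem_erase.mpr ⟨hij.symm, hj⟩
    rw [← Finset.add_sum_erase _ _ hi, ← Finset.add_sum_erase _ _ hji] at hsum ⊢
    rw [Finset.sum_congr rfl fun k hk => transfer_apply_of_ne
      (Finset.ne_of_mem_erase (Finset.mem_of_mem_erase hk)) (Finset.ne_of_mem_erase hk)]
    simp only [transfer_apply_left, transfer_apply_right hij]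
    linarith

lemma card_pos_transfer_lt {s : Finset ℕ} (hj : j ∈ s) (hij : i ≠ j) (hxi : 0 < x i)
    (hxj : 0 < x j) :
    (s.filter fun k => 0 < transfer x i j k).card < (s.filter fun k => 0 < x k).card := by
  refine lt_of_le_of_lt (Finset.card_le_card fun k hk => ?_)
    (Finset.card_erase_lt_of_mem (Finset.mem_filter.mpr ⟨hj, hxj⟩))
  obtain ⟨hks, hk⟩ := Finset.mem_filter.mp hk
  have hkj : k ≠ j := by rintro rfl; simp [hij] at hk
  refine Finset.mem_erase.mpr ⟨hkj, Finset.mem_filter.mpr ⟨hks, ?_⟩⟩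
  by_cases hki : k = i
  · exact hki ▸ hxi
  · rwa [transfer_apply_of_ne hki hkj] at hk

end transfer

lemma LegalWeighting.exists_fewer_positive_of_no_common_edge {r : ℕ} {G : RHypergraph r}
    {x : ℕ → ℝ} (hx : G.LegalWeighting x) {i j : ℕ} (hi : i ∈ G.verts) (hj : j ∈ G.verts)
    (hxi : 0 < x i) (hxj : 0 < x j) (hij : i ≠ j) (hE : ∀ e ∈ G.edges, ¬(i ∈ e ∧ j ∈ e)) :
    ∃ y, G.LegalWeighting y ∧
      (G.verts.filter fun k => 0 < y k).card < (G.verts.filter fun k => 0 < x k).card ∧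
      polyValue G.edges x ≤ polyValue G.edges y := by
  wlog hlink : linkWeight G.edges x j ≤ linkWeight G.edges x i generalizing i j
  · exact this hj hi hxj hxi hij.symm (fun e he h => hE e he h.symm) (le_of_not_ge hlink)
  refine ⟨transfer x i j, legalWeighting_transfer hx hi hj hij,
    card_pos_transfer_lt hj hij hxi hxj, ?_⟩
  rw [polyValue_transfer hij hE]
  exact le_add_of_nonneg_right (mul_nonneg hxj.le (sub_nonneg.mpr hlink))

end RHypergraph

/-- Frankl–Rödl lemma (b): if `x` is an optimum weighting with the minimal number
of positive entries, then any two positive-weight vertices lie in a common edge. -/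
theorem frankl_rodl_b {r : ℕ} (G : RHypergraph r) (x : ℕ → ℝ)
    (hx : G.IsOptimal x)
    (hmin : ∀ y : ℕ → ℝ, G.LegalWeighting y →
      (G.verts.filter fun i => 0 < y i).card <
        (G.verts.filter fun i => 0 < x i).card →
      RHypergraph.polyValue G.edges y < G.lagrangian) :
    ∀ i ∈ G.verts, ∀ j ∈ G.verts, 0 < x i → 0 < x j → i ≠ j →
      ∃ e ∈ G.edges, i ∈ e ∧ j ∈ e := by
  intro i hi j hj hxi hxj hij
  by_contra! hE
  obtain ⟨y, hy, hcard, hle⟩ := hx.1.exists_fewer_positive_of_no_common_edge hi hj hxi hxj hij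
    fun e he h => hE e he h.1 h.2
  have := hmin y hy hcard
  linarith [hx.2]
end
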